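/- The function H(x) = (tanh(x + L/2) - tanh(x - L/2)) / (2 tanh(L/2)) satisfies H(0) ≥ H(x) for all real x; that is, H attains its maximum at x = 0. -/

import Mathlib

/-!
Write `a = L / 2`. Since `tanh u - tanh v = sinh (u - v) / (cosh u * cosh v)`, the numerator of
`H x` is `sinh (2 * a) / (cosh (x + a) * cosh (x - a))` with `sinh (2 * a) ≥ 0`, and
`cosh (x + a) * cosh (x - a) = sinh x ^ 2 + cosh a ^ 2` is smallest at `x = 0`.
-/

open Real

namespace Real

lemma tanh_nonneg {x : ℝ} (hx : 0 ≤ x) : 0 ≤ tanh x := by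
  rw [tanh_eq_sinh_div_cosh]
  exact div_nonneg (sinh_nonneg_iff.2 hx) (cosh_pos x).le

lemma tanh_sub_tanh (u v : ℝ) : tanh u - tanh v = sinh (u - v) / (cosh u * cosh v) := by
  rw [tanh_eq_sinh_div_cosh, tanh_eq_sinh_div_cosh, sinh_sub,
    div_sub_div _ _ (cosh_pos u).ne' (cosh_pos v).ne']

lemma cosh_add_mul_cosh_sub (x y : ℝ) : cosh (x + y) * cosh (x - y) = sinh x ^ 2 + cosh y ^ 2 := by
  rw [cosh_add, cosh_sub]
  linear_combination cosh y ^ 2 * cosh_sq_sub_sinh_sq x + sinh x ^ 2 * cosh_sq_sub_sinh_sq y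

lemma tanh_add_sub_tanh_sub_le (x : ℝ) {a : ℝ} (ha : 0 ≤ a) :
    tanh (x + a) - tanh (x - a) ≤ tanh a - tanh (-a) := by
  rw [tanh_sub_tanh, tanh_sub_tanh, cosh_add_mul_cosh_sub, cosh_neg, ← sq,
    add_sub_sub_cancel, sub_neg_eq_add]
  exact div_le_div_of_nonneg_left (sinh_nonneg_iff.2 (by linarith)) (by positivity)
    (le_add_of_nonneg_left (sq_nonneg _))

end Real

theorem habitat_max_at_zero (L : ℝ) (hL : 0 < L)
    (H : ℝ → ℝ)
    (hH : ∀ x, H x = (Real.tanh (x + L/2) - Real.tanh (x - L/2)) / (2 * Real.tanh (L/2))) :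
    ∀ x : ℝ, H x ≤ H 0 := by
  intro x
  have ha : 0 ≤ L / 2 := by positivity
  rw [hH, hH, zero_add, zero_sub]
  exact div_le_div_of_nonneg_right (tanh_add_sub_tanh_sub_le x ha)
    (mul_nonneg zero_le_two (tanh_nonneg ha))
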